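/- Let (v, i) be a pivot such that v has a left child v.L in CT(P) and mfi(v,i) ≠ [-∞,∞]. Then L(v, i) = max{ ℓ : [ℓ, r] ∈ LFI'(v, i), r < i }, i.e., the left endpoint of the minimal fixed-interval with pivot (v,i) is attained among the inclusion-minimal intervals of LFI(v,i) whose right endpoint is less than i. -/

import Mathlib

/-- Ordered binary trees (possibly empty). -/
inductive BTree : Type
  | nil : BTree
  | node : BTree → BTree → BTree
  deriving DecidableEq

/-- The minimum value of a list of integers (with default `0` for the empty list). -/
noncomputable def minval (l : List ℤ) : ℤ := WithTop.untopD 0 l.minimum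

/-- The 0-based index of the leftmost occurrence of the minimum value. -/
noncomputable def minidx0 (l : List ℤ) : ℕ := l.idxOf (minval l)

theorem minidx0_lt_length {l : List ℤ} (h : l ≠ []) : minidx0 l < l.length := by
  obtain ⟨a, ha⟩ := WithTop.ne_top_iff_exists.mp (List.minimum_ne_top_of_ne_nil h)
  have hmem : a ∈ l := List.minimum_mem ha.symm
  have hval : minval l = a := by simp [minval, ← ha]
  rw [minidx0, hval]
  exact List.idxOf_lt_length_iff.mpr hmem

/-- The Cartesian tree of a string of integers. -/
noncomputable def CT (l : List ℤ) : BTree :=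
  if h : l = [] then .nil
  else .node (CT (l.take (minidx0 l))) (CT (l.drop (minidx0 l + 1)))
termination_by l.length
decreasing_by
  · have := minidx0_lt_length h
    simp [List.length_take]
    omega
  · have : 0 < l.length := List.length_pos_iff.mpr h
    simp [List.length_drop]
    omega

/-- The value of the 1-based position `i` of the string `T` (default `0`). -/
def val (T : List ℤ) (i : ℕ) : ℤ := T.getD (i - 1) 0

/-- `IsSubSeq n m I` : `I` is a strictly increasing sequence of `m` subscripts in `[1, n]`. -/
def IsSubSeq (n m : ℕ) (I : List ℕ) : Prop :=
  I.length = m ∧ I.Pairwise (· < ·) ∧ ∀ j ∈ I, 1 ≤ j ∧ j ≤ n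

/-- The subsequence `T_I` of `T` selected by the (1-based) subscript sequence `I`. -/
def seqAt (T : List ℤ) (I : List ℕ) : List ℤ := I.map (val T)

/-- The substring `P[a..b]` of `P` (1-based, inclusive). -/
def subslice (P : List ℤ) (a b : ℕ) : List ℤ := (P.take b).drop (a - 1)

/-- The left end of the maximal interval around position `v` in which `P[v]` is minimal:
one plus the rightmost position `j < v` carrying a value smaller than `P[v]` (or `1`). -/
def leftEnd (P : List ℤ) (v : ℕ) : ℕ :=
  (WithBot.unbotD 0 ((Finset.Icc 1 (v - 1)).filter (fun j => val P j < val P v)).max) + 1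

/-- The right end of the maximal interval around position `v` in which `P[v]` is minimal:
the leftmost position `j > v` carrying a value smaller than `P[v]`, minus one (or `|P|`). -/
def rightEnd (P : List ℤ) (v : ℕ) : ℕ :=
  (WithTop.untopD (P.length + 1)
    ((Finset.Icc (v + 1) P.length).filter (fun j => val P j < val P v)).min) - 1

/-- `P_v`: the substring of `P` spanned by the subtree of `CT(P)` rooted at node `v`
(nodes are identified with 1-based positions of `P`). -/
def Psub (P : List ℤ) (v : ℕ) : List ℤ := subslice P (leftEnd P v) (rightEnd P v)

/-- The left child `v.L` of node `v` in `CT(P)` (as a 1-based position), if it exists. -/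
noncomputable def leftChild (P : List ℤ) (v : ℕ) : Option ℕ :=
  if leftEnd P v < v then some (leftEnd P v + minidx0 (subslice P (leftEnd P v) (v - 1)))
  else none

/-- The right child `v.R` of node `v` in `CT(P)` (as a 1-based position), if it exists. -/
noncomputable def rightChild (P : List ℤ) (v : ℕ) : Option ℕ :=
  if v < rightEnd P v then some (v + 1 + minidx0 (subslice P (v + 1) (rightEnd P v)))
  else none

/-- `[ℓ, r]` is a fixed-interval with pivot `(v, i)`. -/
def IsFixedInterval (T P : List ℤ) (v i ℓ r : ℕ) : Prop :=
  1 ≤ ℓ ∧ r ≤ T.length ∧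
    ∃ I : List ℕ, IsSubSeq T.length (Psub P v).length I ∧ i ∈ I ∧
      (∀ j ∈ I, ℓ ≤ j ∧ j ≤ r) ∧ CT (seqAt T I) = CT (Psub P v) ∧
      val T i = minval (seqAt T I)

/-- `IntervalSsubset (ℓ', r') (ℓ, r)` : the interval `[ℓ', r']` is strictly contained
in the interval `[ℓ, r]`. -/
def IntervalSsubset (p q : ℕ × ℕ) : Prop := q.1 ≤ p.1 ∧ p.2 ≤ q.2 ∧ p ≠ q

/-- `[ℓ, r]` is a minimal fixed-interval with pivot `(v, i)`. -/
def IsMinFixedInterval (T P : List ℤ) (v i ℓ r : ℕ) : Prop :=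
  IsFixedInterval T P v i ℓ r ∧
    ¬∃ ℓ' r', IsFixedInterval T P v i ℓ' r' ∧ IntervalSsubset (ℓ', r') (ℓ, r)

open Classical in
/-- The left endpoint `L(v, i)` of the minimal fixed-interval `mfi(v, i)`,
which is `-∞` (i.e. `⊥`) if no (minimal) fixed-interval with pivot `(v, i)` exists. -/
noncomputable def mfiL (T P : List ℤ) (v i : ℕ) : WithBot ℕ :=
  if h : ∃ ℓ r, IsMinFixedInterval T P v i ℓ r then (h.choose : WithBot ℕ) else ⊥

open Classical in
/-- The right endpoint `R(v, i)` of the minimal fixed-interval `mfi(v, i)`,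
which is `∞` (i.e. `⊤`) if no (minimal) fixed-interval with pivot `(v, i)` exists. -/
noncomputable def mfiR (T P : List ℤ) (v i : ℕ) : WithTop ℕ :=
  if h : ∃ ℓ r, IsMinFixedInterval T P v i ℓ r then (h.choose_spec.choose : WithTop ℕ) else ⊤

/-- `I` is a trace of pattern `P` in text `T`. -/
def IsTrace (T P : List ℤ) (I : List ℕ) : Prop :=
  IsSubSeq T.length P.length I ∧ CT (seqAt T I) = CT P

/-- `[ℓ, r]` is an occurrence interval for `P` over `T`. -/
def IsOccInterval (T P : List ℤ) (ℓ r : ℕ) : Prop :=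
  1 ≤ ℓ ∧ r ≤ T.length ∧ ∃ I, IsTrace T P I ∧ ∀ j ∈ I, ℓ ≤ j ∧ j ≤ r

/-- `[ℓ, r]` is a minimal occurrence interval for `P` over `T`. -/
def IsMinOccInterval (T P : List ℤ) (ℓ r : ℕ) : Prop :=
  IsOccInterval T P ℓ r ∧
    ¬∃ ℓ' r', IsOccInterval T P ℓ' r' ∧ IntervalSsubset (ℓ', r') (ℓ, r)


/-- `LFI(v, i)` for a node `v` with left child `v.L = u`: the set of candidate intervals
`[L(v.L, j), R(v.L, j)]` for `1 ≤ j ≤ n` with `T[i] < T[j]`. -/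
def LFI (T P : List ℤ) (u i : ℕ) : Set (WithBot ℕ × WithTop ℕ) :=
  { p | ∃ j, 1 ≤ j ∧ j ≤ T.length ∧ val T i < val T j ∧
      p = (mfiL T P u j, mfiR T P u j) }

/-- `LFI'(v, i)`: the intervals of `LFI(v, i)` that are minimal under inclusion within
`LFI(v, i)`, i.e., contain no other interval of `LFI(v, i)` as a proper subset. -/
def LFIMin (T P : List ℤ) (u i : ℕ) : Set (WithBot ℕ × WithTop ℕ) :=
  { p | p ∈ LFI T P u i ∧
      ¬∃ q ∈ LFI T P u i, p.1 ≤ q.1 ∧ q.2 ≤ p.2 ∧ q ≠ p }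


/-!
A witness `I` of a fixed-interval with pivot `(v, i)` splits at `i` into a trace of `P_{v.L}`
inside `[ℓ, i)` and a trace of `P_{v.R}` inside `(i, r]`, both with values above `T[i]`. Left
and right halves of different witnesses recombine freely, so the fixed-intervals with a given
pivot are closed under `([ℓ, r], [ℓ', r']) ↦ [ℓ', r]`; hence `mfi(v, i)` is contained in every
fixed-interval with pivot `(v, i)`.

The left half of a witness of `mfi(v, i)`, pivoted at its minimum `j`, is a fixed-interval for
`(v.L, j)` inside `[L(v, i), i - 1]` with `T[i] < T[j]`. Conversely a fixed-interval `[ℓ', r']`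
for such a `(v.L, j)` with `r' < i` recombines with the right half into the fixed-interval
`[ℓ', R(v, i)]`, so `ℓ' ≤ L(v, i)`. Thus `L(v, i)` is the largest left endpoint of an interval
of `LFI(v, i)` ending before `i`, and it is attained; among the intervals attaining it, the one
with the smallest right endpoint lies in `LFI'(v, i)`.
-/
def BTree.size : BTree → ℕ
  | .nil => 0
  | .node a b => a.size + b.size + 1

lemma CT_of_ne_nil {l : List ℤ} (h : l ≠ []) :
    CT l = .node (CT (l.take (minidx0 l))) (CT (l.drop (minidx0 l + 1))) := by
  rw [CT, dif_neg h]

lemma size_CT (l : List ℤ) : (CT l).size = l.length := by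
  fun_induction CT l with
  | case1 => rfl
  | case2 l h ih₁ ih₂ =>
    have := minidx0_lt_length h
    simp only [BTree.size, ih₁, ih₂, List.length_take, List.length_drop]
    omega

lemma length_eq_of_CT_eq {l₁ l₂ : List ℤ} (h : CT l₁ = CT l₂) : l₁.length = l₂.length := by
  rw [← size_CT, h, size_CT]

lemma coe_minval {l : List ℤ} (h : l ≠ []) : (minval l : WithTop ℤ) = l.minimum := by
  obtain ⟨a, ha⟩ := WithTop.ne_top_iff_exists.mp (List.minimum_ne_top_of_ne_nil h)
  simp [minval, ← ha]

lemma minval_mem {l : List ℤ} (h : l ≠ []) : minval l ∈ l :=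
  List.minimum_mem (coe_minval h).symm

lemma minval_le {l : List ℤ} {x : ℤ} (hx : x ∈ l) : minval l ≤ x := by
  have := List.minimum_le_of_mem' hx
  rwa [← coe_minval (List.ne_nil_of_mem hx), WithTop.coe_le_coe] at this

lemma minval_append_cons {A B : List ℤ} {x : ℤ} (hA : ∀ y ∈ A, x ≤ y) (hB : ∀ y ∈ B, x ≤ y) :
    minval (A ++ x :: B) = x := by
  refine le_antisymm (minval_le (by simp)) ?_
  have hmem := minval_mem (l := A ++ x :: B) (by simp)
  simp only [List.mem_append, List.mem_cons] at hmem
  rcases hmem with h | h | h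
  · exact hA _ h
  · exact h.ge
  · exact hB _ h

lemma minidx0_append_cons {A B : List ℤ} {x : ℤ} (hA : ∀ y ∈ A, x < y) (hB : ∀ y ∈ B, x ≤ y) :
    minidx0 (A ++ x :: B) = A.length := by
  have hx : x ∉ A := fun h => lt_irrefl x (hA x h)
  rw [minidx0, minval_append_cons (fun y hy => (hA y hy).le) hB,
    List.idxOf_append_of_notMem hx, List.idxOf_cons_self, add_zero]

lemma CT_append_cons {A B : List ℤ} {x : ℤ} (hA : ∀ y ∈ A, x < y) (hB : ∀ y ∈ B, x < y) :
    CT (A ++ x :: B) = .node (CT A) (CT B) := by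
  rw [CT_of_ne_nil (by simp), minidx0_append_cons hA (fun y hy => (hB y hy).le),
    List.take_left, List.drop_length_add_append, List.drop_one, List.tail_cons]

lemma getElem?_minidx0 {l : List ℤ} (h : l ≠ []) : l[minidx0 l]? = some (minval l) :=
  List.getElem?_idxOf (minval_mem h)

lemma CT_children_eq_of_CT_eq {L Q : List ℤ} (hQ : Q ≠ []) (h : CT L = CT Q) :
    minidx0 L = minidx0 Q ∧ CT (L.take (minidx0 Q)) = CT (Q.take (minidx0 Q)) ∧
      CT (L.drop (minidx0 Q + 1)) = CT (Q.drop (minidx0 Q + 1)) := by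
  have hL : L ≠ [] := by
    rintro rfl
    exact hQ (List.eq_nil_of_length_eq_zero (length_eq_of_CT_eq h).symm)
  rw [CT_of_ne_nil hL, CT_of_ne_nil hQ] at h
  obtain ⟨h₁, h₂⟩ := BTree.node.inj h
  have hk : minidx0 L = minidx0 Q := by
    have := length_eq_of_CT_eq h₁
    have := minidx0_lt_length hL
    have := minidx0_lt_length hQ
    simp only [List.length_take] at *
    omega
  rw [hk] at h₁ h₂
  exact ⟨hk, h₁, h₂⟩

lemma val_eq_getElem {T : List ℤ} {a : ℕ} (h₁ : 1 ≤ a) (h₂ : a ≤ T.length) :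
    val T a = T[a - 1] :=
  List.getD_eq_getElem _ _ _

lemma val_injOn {T : List ℤ} (hT : T.Nodup) : Set.InjOn (val T) (Set.Icc 1 T.length) := by
  rintro a ⟨ha₁, ha₂⟩ b ⟨hb₁, hb₂⟩ h
  rw [val_eq_getElem ha₁ ha₂, val_eq_getElem hb₁ hb₂, hT.getElem_inj_iff] at h
  omega

lemma seqAt_append_cons (T : List ℤ) (A B : List ℕ) (i : ℕ) :
    seqAt T (A ++ i :: B) = seqAt T A ++ val T i :: seqAt T B := by
  simp [seqAt]

def IsTraceIn (T Q : List ℤ) (s : Set ℕ) (I : List ℕ) : Prop :=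
  I.Pairwise (· < ·) ∧ (∀ j ∈ I, j ∈ s) ∧ CT (seqAt T I) = CT Q

lemma IsTraceIn.mono {T Q : List ℤ} {s t : Set ℕ} {I : List ℕ} (h : IsTraceIn T Q s I)
    (hst : s ⊆ t) : IsTraceIn T Q t I :=
  ⟨h.1, fun j hj => hst (h.2.1 j hj), h.2.2⟩

lemma IsTraceIn.length_eq {T Q : List ℤ} {s : Set ℕ} {I : List ℕ} (h : IsTraceIn T Q s I) :
    I.length = Q.length := by
  simpa [seqAt] using length_eq_of_CT_eq h.2.2

lemma IsTraceIn.split_at_min {T Q : List ℤ} (hT : T.Nodup) (hQ : Q ≠ []) {ℓ r i : ℕ}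
    {I : List ℕ} (hℓ : 1 ≤ ℓ) (hr : r ≤ T.length) (h : IsTraceIn T Q (Set.Icc ℓ r) I)
    (hi : i ∈ I) (hmin : val T i = minval (seqAt T I)) :
    ∃ A B, IsTraceIn T (Q.take (minidx0 Q)) (Set.Ico ℓ i) A ∧
      IsTraceIn T (Q.drop (minidx0 Q + 1)) (Set.Ioc i r) B ∧
      (∀ a ∈ A, val T i < val T a) ∧ ∀ b ∈ B, val T i < val T b := by
  have hlen := h.length_eq
  obtain ⟨hsort, hbnd, hct⟩ := h
  obtain ⟨hk, hleft, hright⟩ := CT_children_eq_of_CT_eq hQ hct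
  have hinj : ∀ a ∈ I, ∀ b ∈ I, val T a = val T b → a = b := fun a ha b hb =>
    val_injOn hT ⟨hℓ.trans (hbnd a ha).1, (hbnd a ha).2.trans hr⟩
      ⟨hℓ.trans (hbnd b hb).1, (hbnd b hb).2.trans hr⟩
  have hlt : ∀ a ∈ I, a ≠ i → val T i < val T a := fun a ha hai =>
    (hmin ▸ minval_le (List.mem_map_of_mem ha)).lt_of_ne fun h => hai (hinj _ ha _ hi h.symm)
  obtain ⟨A, c, B, rfl, hA⟩ : ∃ A c B, I = A ++ c :: B ∧ A.length = minidx0 Q := by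
    have := minidx0_lt_length hQ
    exact ⟨I.take (minidx0 Q), I[minidx0 Q], I.drop (minidx0 Q + 1),
      by rw [← List.drop_eq_getElem_cons, List.take_append_drop], by simp; omega⟩
  have hci : c = i := by
    refine hinj _ (by simp) _ hi ?_
    have := getElem?_minidx0 (l := seqAt T (A ++ c :: B)) (by simp [seqAt])
    rw [hk, ← hA, ← hmin, seqAt_append_cons] at this
    simpa [seqAt] using this
  subst hci
  have hAseq : (seqAt T A).length = minidx0 Q := by simpa [seqAt] using hA
  rw [seqAt_append_cons, ← hAseq, List.take_left, hAseq] at hleft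
  rw [seqAt_append_cons, ← hAseq, List.drop_length_add_append, List.drop_one,
    List.tail_cons, hAseq] at hright
  simp only [List.pairwise_append, List.pairwise_cons, List.mem_cons] at hsort
  obtain ⟨hsA, ⟨hcB, hsB⟩, hAcB⟩ := hsort
  refine ⟨A, B, ⟨hsA, fun a ha => ⟨(hbnd a (by simp [ha])).1, hAcB a ha c (Or.inl rfl)⟩, hleft⟩,
    ⟨hsB, fun b hb => ⟨hcB b hb, (hbnd b (by simp [hb])).2⟩, hright⟩,
    fun a ha => hlt a (by simp [ha]) (hAcB a ha c (Or.inl rfl)).ne,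
    fun b hb => hlt b (by simp [hb]) (hcB b hb).ne'⟩

lemma IsTraceIn.append_cons {T Q : List ℤ} (hQ : Q ≠ []) {ℓ r i : ℕ} {A B : List ℕ}
    (hA : IsTraceIn T (Q.take (minidx0 Q)) (Set.Ico ℓ i) A)
    (hB : IsTraceIn T (Q.drop (minidx0 Q + 1)) (Set.Ioc i r) B)
    (hvA : ∀ a ∈ A, val T i < val T a) (hvB : ∀ b ∈ B, val T i < val T b)
    (hℓi : ℓ ≤ i) (hir : i ≤ r) :
    IsTraceIn T Q (Set.Icc ℓ r) (A ++ i :: B) ∧ val T i = minval (seqAt T (A ++ i :: B)) := by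
  obtain ⟨hsA, hbA, hctA⟩ := hA
  obtain ⟨hsB, hbB, hctB⟩ := hB
  have hvA' : ∀ y ∈ seqAt T A, val T i < y := by simpa [seqAt] using hvA
  have hvB' : ∀ y ∈ seqAt T B, val T i < y := by simpa [seqAt] using hvB
  refine ⟨⟨?_, ?_, ?_⟩, ?_⟩
  · simp only [List.pairwise_append, List.pairwise_cons, List.mem_cons]
    refine ⟨hsA, ⟨fun b hb => (hbB b hb).1, hsB⟩, ?_⟩
    rintro a ha c (rfl | hc)
    · exact (hbA a ha).2
    · exact (hbA a ha).2.trans (hbB c hc).1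
  · simp only [List.mem_append, List.mem_cons]
    rintro j (hj | rfl | hj)
    · exact Set.Ico_subset_Icc_self.trans (Set.Icc_subset_Icc_right hir) (hbA j hj)
    · exact ⟨hℓi, hir⟩
    · exact Set.Ioc_subset_Icc_self.trans (Set.Icc_subset_Icc_left hℓi) (hbB j hj)
  · rw [seqAt_append_cons, CT_append_cons hvA' hvB', hctA, hctB, CT_of_ne_nil hQ]
  · rw [seqAt_append_cons, minval_append_cons (fun y hy => (hvA' y hy).le)
      (fun y hy => (hvB' y hy).le)]

section FixedInterval

variable {T P : List ℤ} {v i ℓ r : ℕ}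

lemma isFixedInterval_iff_isTraceIn :
    IsFixedInterval T P v i ℓ r ↔ 1 ≤ ℓ ∧ r ≤ T.length ∧
      ∃ I, IsTraceIn T (Psub P v) (Set.Icc ℓ r) I ∧ i ∈ I ∧ val T i = minval (seqAt T I) := by
  constructor
  · rintro ⟨hℓ, hr, I, ⟨-, hsort, -⟩, hi, hbnd, hct, hmin⟩
    exact ⟨hℓ, hr, I, ⟨hsort, hbnd, hct⟩, hi, hmin⟩
  · rintro ⟨hℓ, hr, I, hI, hi, hmin⟩
    refine ⟨hℓ, hr, I, ⟨hI.length_eq, hI.1, fun j hj => ?_⟩, hi, hI.2.1, hI.2.2, hmin⟩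
    exact ⟨hℓ.trans (hI.2.1 j hj).1, (hI.2.1 j hj).2.trans hr⟩

lemma IsFixedInterval.pivot_mem (h : IsFixedInterval T P v i ℓ r) : ℓ ≤ i ∧ i ≤ r :=
  let ⟨_, _, _, _, hi, hbnd, _⟩ := h
  hbnd i hi

lemma IsFixedInterval.Psub_ne_nil (h : IsFixedInterval T P v i ℓ r) : Psub P v ≠ [] := by
  obtain ⟨_, _, I, ⟨hlen, _⟩, hi, _⟩ := h
  rw [← List.length_pos_iff, ← hlen]
  exact List.length_pos_of_mem hi

lemma isFixedInterval_iff (hT : T.Nodup) (hQ : Psub P v ≠ []) :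
    IsFixedInterval T P v i ℓ r ↔ 1 ≤ ℓ ∧ r ≤ T.length ∧ ℓ ≤ i ∧ i ≤ r ∧
      ∃ A B, IsTraceIn T ((Psub P v).take (minidx0 (Psub P v))) (Set.Ico ℓ i) A ∧
        IsTraceIn T ((Psub P v).drop (minidx0 (Psub P v) + 1)) (Set.Ioc i r) B ∧
        (∀ a ∈ A, val T i < val T a) ∧ ∀ b ∈ B, val T i < val T b := by
  rw [isFixedInterval_iff_isTraceIn]
  constructor
  · rintro ⟨hℓ, hr, I, hI, hi, hmin⟩
    exact ⟨hℓ, hr, (hI.2.1 i hi).1, (hI.2.1 i hi).2, hI.split_at_min hT hQ hℓ hr hi hmin⟩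
  · rintro ⟨hℓ, hr, hℓi, hir, A, B, hA, hB, hvA, hvB⟩
    obtain ⟨hI, hmin⟩ := IsTraceIn.append_cons hQ hA hB hvA hvB hℓi hir
    exact ⟨hℓ, hr, _, hI, by simp, hmin⟩

lemma IsFixedInterval.cross (hT : T.Nodup) {ℓ' r' : ℕ} (h : IsFixedInterval T P v i ℓ r)
    (h' : IsFixedInterval T P v i ℓ' r') : IsFixedInterval T P v i ℓ' r := by
  have hQ := h.Psub_ne_nil
  obtain ⟨-, hr, -, hir, -, B, -, hB, -, hvB⟩ := (isFixedInterval_iff hT hQ).1 h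
  obtain ⟨hℓ', -, hℓ'i, -, A, -, hA, -, hvA, -⟩ := (isFixedInterval_iff hT hQ).1 h'
  exact (isFixedInterval_iff hT hQ).2 ⟨hℓ', hr, hℓ'i, hir, A, B, hA, hB, hvA, hvB⟩

lemma IsFixedInterval.exists_isMinFixedInterval (h : IsFixedInterval T P v i ℓ r) :
    ∃ ℓ' r', IsMinFixedInterval T P v i ℓ' r' := by
  obtain ⟨⟨ℓ', r'⟩, hfi, hmin⟩ := (measure fun p : ℕ × ℕ => p.2 - p.1).wf.has_min
    {p | IsFixedInterval T P v i p.1 p.2} ⟨(ℓ, r), h⟩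
  refine ⟨ℓ', r', hfi, ?_⟩
  rintro ⟨ℓ'', r'', hfi', hℓ, hr, hne⟩
  refine hmin (ℓ'', r'') hfi' ?_
  have := hfi'.pivot_mem
  have : ℓ'' ≠ ℓ' ∨ r'' ≠ r' := by grind
  show r'' - ℓ'' < r' - ℓ'
  dsimp only at hℓ hr
  omega

lemma IsMinFixedInterval.le (hT : T.Nodup) {ℓ' r' : ℕ} (hm : IsMinFixedInterval T P v i ℓ r)
    (h : IsFixedInterval T P v i ℓ' r') : ℓ' ≤ ℓ ∧ r ≤ r' := by
  have hsub : ∀ ℓ'' r'', IsFixedInterval T P v i ℓ'' r'' → ℓ ≤ ℓ'' → r'' ≤ r →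
      ℓ'' = ℓ ∧ r'' = r := fun ℓ'' r'' h'' hℓ hr => by
    by_contra hne
    exact hm.2 ⟨ℓ'', r'', h'', hℓ, hr, by grind⟩
  constructor
  · by_contra! hlt
    exact hlt.ne' (hsub _ _ (hm.1.cross hT h) hlt.le le_rfl).1
  · by_contra! hlt
    exact hlt.ne (hsub _ _ (h.cross hT hm.1) le_rfl hlt.le).2

lemma IsMinFixedInterval.mfi_eq (hT : T.Nodup) (hm : IsMinFixedInterval T P v i ℓ r) :
    mfiL T P v i = ℓ ∧ mfiR T P v i = r := by
  have hex : ∃ ℓ r, IsMinFixedInterval T P v i ℓ r := ⟨ℓ, r, hm⟩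
  have h₁ := hm.le hT hex.choose_spec.choose_spec.1
  have h₂ := hex.choose_spec.choose_spec.le hT hm.1
  rw [mfiL, mfiR, dif_pos hex, dif_pos hex]
  exact ⟨by norm_cast; omega, by norm_cast; omega⟩

lemma exists_isMinFixedInterval_of_mfiR_ne_top (h : mfiR T P v i ≠ ⊤) :
    ∃ ℓ r, IsMinFixedInterval T P v i ℓ r := by
  by_contra hex
  exact h (dif_neg hex)

end FixedInterval

section Pattern

variable {P : List ℤ} {w j : ℕ}

lemma one_le_leftEnd (P : List ℤ) (w : ℕ) : 1 ≤ leftEnd P w :=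
  Nat.le_add_left 1 _

lemma leftEnd_le (hw : 1 ≤ w) : leftEnd P w ≤ w := by
  unfold leftEnd
  cases h : ((Finset.Icc 1 (w - 1)).filter fun j => val P j < val P w).max with
  | bot => simpa using hw
  | coe m =>
    have := Finset.mem_of_max h
    simp only [Finset.mem_filter, Finset.mem_Icc] at this
    simp only [WithBot.unbotD_coe]
    omega

lemma not_lt_of_leftEnd_le (h₁ : leftEnd P w ≤ j) (h₂ : j < w) : ¬val P j < val P w := by
  intro hlt
  unfold leftEnd at h₁
  have hj : j ∈ (Finset.Icc 1 (w - 1)).filter fun j => val P j < val P w := by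
    simp only [Finset.mem_filter, Finset.mem_Icc]
    omega
  obtain ⟨m, hm⟩ := Finset.max_of_mem hj
  have := Finset.le_max_of_eq hj hm
  simp only [hm, WithBot.unbotD_coe] at h₁
  omega

lemma val_pred_leftEnd_lt (h : 1 < leftEnd P w) : val P (leftEnd P w - 1) < val P w := by
  unfold leftEnd at h ⊢
  cases hm : ((Finset.Icc 1 (w - 1)).filter fun j => val P j < val P w).max with
  | bot => simp [hm] at h
  | coe m =>
    have := Finset.mem_of_max hm
    simp only [Finset.mem_filter] at this
    simpa using this.2

lemma leftEnd_eq {a : ℕ} (ha : 1 ≤ a) (haw : a ≤ w)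
    (hin : ∀ j, a ≤ j → j < w → ¬val P j < val P w)
    (hbd : 1 < a → val P (a - 1) < val P w) : leftEnd P w = a := by
  have hle := leftEnd_le (P := P) (ha.trans haw)
  have := one_le_leftEnd P w
  apply le_antisymm
  · by_contra! hlt
    exact hin _ (by omega) (by omega) (val_pred_leftEnd_lt (by omega))
  · by_contra! hlt
    exact not_lt_of_leftEnd_le (by omega) (by omega) (hbd (by omega))

lemma rightEnd_le_length (P : List ℤ) (w : ℕ) : rightEnd P w ≤ P.length := by
  unfold rightEnd
  cases h : ((Finset.Icc (w + 1) P.length).filter fun j => val P j < val P w).min with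
  | top => simp
  | coe m =>
    have := Finset.mem_of_min h
    simp only [Finset.mem_filter, Finset.mem_Icc] at this
    simp only [WithTop.untopD_coe]
    omega

lemma le_rightEnd (hw : w ≤ P.length) : w ≤ rightEnd P w := by
  unfold rightEnd
  cases h : ((Finset.Icc (w + 1) P.length).filter fun j => val P j < val P w).min with
  | top => simpa using hw
  | coe m =>
    have := Finset.mem_of_min h
    simp only [Finset.mem_filter, Finset.mem_Icc] at this
    simp only [WithTop.untopD_coe]
    omega

lemma not_lt_of_le_rightEnd (h₁ : w < j) (h₂ : j ≤ rightEnd P w) : ¬val P j < val P w := by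
  intro hlt
  have hjP := h₂.trans (rightEnd_le_length P w)
  unfold rightEnd at h₂
  have hj : j ∈ (Finset.Icc (w + 1) P.length).filter fun j => val P j < val P w := by
    simp only [Finset.mem_filter, Finset.mem_Icc]
    omega
  obtain ⟨m, hm⟩ := Finset.min_of_mem hj
  have := Finset.min_le_of_eq hj hm
  simp only [hm, WithTop.untopD_coe] at h₂
  omega

lemma val_succ_rightEnd_lt (h : rightEnd P w < P.length) :
    val P (rightEnd P w + 1) < val P w := by
  unfold rightEnd at h ⊢
  cases hm : ((Finset.Icc (w + 1) P.length).filter fun j => val P j < val P w).min with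
  | top => simp [hm] at h
  | coe m =>
    have := Finset.mem_of_min hm
    simp only [Finset.mem_filter, Finset.mem_Icc] at this
    simp only [WithTop.untopD_coe]
    rw [Nat.sub_add_cancel (by omega)]
    exact this.2

lemma rightEnd_eq {b : ℕ} (hwb : w ≤ b) (hb : b ≤ P.length)
    (hin : ∀ j, w < j → j ≤ b → ¬val P j < val P w)
    (hbd : b < P.length → val P (b + 1) < val P w) : rightEnd P w = b := by
  have hle := le_rightEnd (P := P) (hwb.trans hb)
  have := rightEnd_le_length P w
  apply le_antisymm
  · by_contra! hlt
    exact not_lt_of_le_rightEnd (by omega) hlt (hbd (by omega))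
  · by_contra! hlt
    exact hin _ (by omega) (by omega) (val_succ_rightEnd_lt (by omega))

end Pattern

section Psub

variable {P : List ℤ} {a b v w u : ℕ}

lemma length_subslice (hb : b ≤ P.length) : (subslice P a b).length = b - (a - 1) := by
  simp only [subslice, List.length_drop, List.length_take]
  omega

lemma getElem?_subslice {k : ℕ} (ha : 1 ≤ a) (hb : b ≤ P.length) (hk : k < b - (a - 1)) :
    (subslice P a b)[k]? = some (val P (a + k)) := by
  rw [subslice, List.getElem?_drop, List.getElem?_take_of_lt (by omega),
    List.getElem?_eq_getElem (by omega), val_eq_getElem (by omega) (by omega)]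
  congr 2
  omega

lemma mem_subslice {y : ℤ} (ha : 1 ≤ a) (hb : b ≤ P.length) :
    y ∈ subslice P a b ↔ ∃ j, a ≤ j ∧ j ≤ b ∧ val P j = y := by
  rw [List.mem_iff_getElem?]
  constructor
  · rintro ⟨k, hk⟩
    have hklt : k < b - (a - 1) := by
      rw [← length_subslice hb]
      exact (List.getElem?_eq_some_iff.1 hk).1
    rw [getElem?_subslice ha hb hklt, Option.some_inj] at hk
    exact ⟨a + k, by omega, by omega, hk⟩
  · rintro ⟨j, hj₁, hj₂, rfl⟩
    exact ⟨j - a, by rw [getElem?_subslice ha hb (by omega), Nat.add_sub_cancel' hj₁]⟩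

lemma subslice_eq_append_cons (ha : 1 ≤ a) (haw : a ≤ w) (hwb : w ≤ b) (hb : b ≤ P.length) :
    subslice P a b = subslice P a (w - 1) ++ val P w :: subslice P (w + 1) b := by
  have hsplit : P.take b = P.take (w - 1) ++ val P w :: (P.take b).drop w := by
    conv_lhs => rw [← List.take_append_drop (w - 1) (P.take b)]
    rw [List.take_take, min_eq_left (by omega),
      List.drop_eq_getElem_cons (by simp; omega), List.getElem_take,
      val_eq_getElem (by omega) (by omega), Nat.sub_add_cancel (by omega)]
  rw [subslice, hsplit, List.drop_append_of_le_length (by simp; omega)]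
  simp [subslice]

lemma Psub_eq_append_cons (hw : 1 ≤ w ∧ w ≤ P.length) :
    Psub P w = subslice P (leftEnd P w) (w - 1) ++ val P w :: subslice P (w + 1) (rightEnd P w) :=
  subslice_eq_append_cons (one_le_leftEnd P w) (leftEnd_le hw.1) (le_rightEnd hw.2)
    (rightEnd_le_length P w)

lemma Psub_ne_nil (hw : 1 ≤ w ∧ w ≤ P.length) : Psub P w ≠ [] := by
  simp [Psub_eq_append_cons hw]

lemma val_lt_of_leftEnd_le (hP : P.Nodup) (hw : w ≤ P.length) {j : ℕ} (h₁ : leftEnd P w ≤ j)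
    (h₂ : j < w) : val P w < val P j := by
  have := one_le_leftEnd P w
  refine (not_lt.1 (not_lt_of_leftEnd_le h₁ h₂)).lt_of_ne fun h => ?_
  have := val_injOn hP ⟨by omega, hw⟩ ⟨by omega, by omega⟩ h
  omega

lemma minidx0_Psub (hP : P.Nodup) (hw : 1 ≤ w ∧ w ≤ P.length) :
    minidx0 (Psub P w) = (subslice P (leftEnd P w) (w - 1)).length := by
  have := one_le_leftEnd P w
  have := rightEnd_le_length P w
  rw [Psub_eq_append_cons hw]
  apply minidx0_append_cons
  · intro y hy
    obtain ⟨j, hj₁, hj₂, rfl⟩ := (mem_subslice (one_le_leftEnd P w) (by omega)).1 hy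
    exact val_lt_of_leftEnd_le hP hw.2 hj₁ (by omega)
  · intro y hy
    obtain ⟨j, hj₁, hj₂, rfl⟩ := (mem_subslice (by omega) (by omega)).1 hy
    exact not_lt.1 (not_lt_of_le_rightEnd (by omega) hj₂)

lemma leftChild_mem_Ico (hv : v ≤ P.length) (hu : leftChild P v = some u) :
    u ∈ Set.Ico (leftEnd P v) v := by
  rw [leftChild] at hu
  split_ifs at hu with hav
  obtain rfl := Option.some.inj hu
  have hW : (subslice P (leftEnd P v) (v - 1)).length = v - leftEnd P v := by
    rw [length_subslice (by omega)]
    have := one_le_leftEnd P v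
    omega
  have := minidx0_lt_length (l := subslice P (leftEnd P v) (v - 1))
    (by rw [← List.length_pos_iff, hW]; omega)
  exact ⟨by omega, by omega⟩

lemma Psub_leftChild (hP : P.Nodup) (hv : 1 ≤ v ∧ v ≤ P.length) (hu : leftChild P v = some u) :
    Psub P u = (Psub P v).take (minidx0 (Psub P v)) := by
  rw [minidx0_Psub hP hv, Psub_eq_append_cons hv, List.take_left]
  obtain ⟨hau, huv⟩ := leftChild_mem_Ico hv.2 hu
  have ha := one_le_leftEnd P v
  rw [leftChild, if_pos (hau.trans_lt huv), Option.some_inj] at hu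
  set W := subslice P (leftEnd P v) (v - 1)
  have hvalu : val P u = minval W := by
    have hW : W ≠ [] := by
      rw [← List.length_pos_iff, length_subslice (by omega)]
      omega
    have := getElem?_minidx0 hW
    rwa [getElem?_subslice ha (by omega) (by omega), hu, Option.some_inj] at this
  have hmin : ∀ j, leftEnd P v ≤ j → j ≤ v - 1 → ¬val P j < val P u := fun j hj₁ hj₂ =>
    not_lt.2 (hvalu ▸ minval_le ((mem_subslice ha (by omega)).2 ⟨j, hj₁, hj₂, rfl⟩))
  have hvu : val P v < val P u := val_lt_of_leftEnd_le hP hv.2 hau huv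
  have hL : leftEnd P u = leftEnd P v :=
    leftEnd_eq ha hau (fun j hj₁ hj₂ => hmin j hj₁ (by omega))
      fun h => (val_pred_leftEnd_lt h).trans hvu
  have hR : rightEnd P u = v - 1 :=
    rightEnd_eq (by omega) (by omega) (fun j hj₁ hj₂ => hmin j (by omega) hj₂)
      fun _ => by rwa [Nat.sub_add_cancel hv.1]
  rw [Psub, hL, hR]

end Psub

lemma exists_minimal_of_fst_le {α β : Type*} [PartialOrder α] [PartialOrder β] [WellFoundedLT β]
    {S : Set (α × β)} {a : α} {c : β} (hfst : ∀ q ∈ S, q.2 < c → q.1 ≤ a)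
    (hex : ∃ b, (a, b) ∈ S ∧ b < c) :
    ∃ b, ((a, b) ∈ S ∧ ¬∃ q ∈ S, a ≤ q.1 ∧ q.2 ≤ b ∧ q ≠ (a, b)) ∧ b < c := by
  obtain ⟨b, ⟨hbS, hbc⟩, hmin⟩ := wellFounded_lt.has_min {b | (a, b) ∈ S ∧ b < c} hex
  refine ⟨b, ⟨hbS, ?_⟩, hbc⟩
  rintro ⟨q, hqS, haq, hqb, hne⟩
  have hq₁ : q.1 = a := le_antisymm (hfst q hqS (hqb.trans_lt hbc)) haq
  refine hne (Prod.ext hq₁ (hqb.eq_of_not_lt fun hlt => hmin q.2 ⟨?_, hlt.trans hbc⟩ hlt))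
  rwa [← hq₁]

section LeftChild

variable {T P : List ℤ} {v u i ℓ r : ℕ}

lemma IsFixedInterval.exists_leftChild (hT : T.Nodup) (hP : P.Nodup)
    (hv : 1 ≤ v ∧ v ≤ P.length) (hu : leftChild P v = some u)
    (h : IsFixedInterval T P v i ℓ r) :
    ∃ j, 1 ≤ j ∧ j ≤ T.length ∧ val T i < val T j ∧ IsFixedInterval T P u j ℓ (i - 1) := by
  obtain ⟨hℓ, hr, hℓi, hir, A, -, hA, -, hvA, -⟩ := (isFixedInterval_iff hT h.Psub_ne_nil).1 h
  rw [← Psub_leftChild hP hv hu] at hA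
  have hAne : seqAt T A ≠ [] := by
    obtain ⟨hau, huv⟩ := leftChild_mem_Ico hv.2 hu
    have := one_le_leftEnd P v
    have hu' : 1 ≤ u ∧ u ≤ P.length := ⟨by omega, by omega⟩
    rw [← List.length_pos_iff, seqAt, List.length_map, hA.length_eq, List.length_pos_iff]
    exact _root_.Psub_ne_nil hu'
  obtain ⟨j, hjA, hj⟩ := List.mem_map.1 (minval_mem hAne)
  obtain ⟨hℓj, hji⟩ := hA.2.1 j hjA
  refine ⟨j, by omega, by omega, hvA j hjA, isFixedInterval_iff_isTraceIn.2
    ⟨hℓ, by omega, A, hA.mono fun x hx => ⟨hx.1, Nat.le_sub_one_of_lt hx.2⟩, hjA, hj⟩⟩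

lemma IsFixedInterval.join_leftChild (hT : T.Nodup) (hP : P.Nodup)
    (hv : 1 ≤ v ∧ v ≤ P.length) (hu : leftChild P v = some u) {j ℓ' r' : ℕ}
    (h : IsFixedInterval T P v i ℓ r) (h' : IsFixedInterval T P u j ℓ' r') (hr' : r' < i)
    (hij : val T i < val T j) : IsFixedInterval T P v i ℓ' r := by
  have hQ := h.Psub_ne_nil
  obtain ⟨-, hr, -, hir, -, B, -, hB, -, hvB⟩ := (isFixedInterval_iff hT hQ).1 h
  obtain ⟨hℓ', -, J, hJ, -, hj⟩ := isFixedInterval_iff_isTraceIn.1 h'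
  have := h'.pivot_mem
  refine (isFixedInterval_iff hT hQ).2 ⟨hℓ', hr, by omega, hir, J, B, ?_, hB, ?_, hvB⟩
  · rw [← Psub_leftChild hP hv hu]
    exact hJ.mono (Set.Icc_subset_Ico_right hr')
  · exact fun a ha => hij.trans_le (hj ▸ minval_le (List.mem_map_of_mem ha))

lemma IsMinFixedInterval.le_of_leftChild (hT : T.Nodup) (hP : P.Nodup)
    (hv : 1 ≤ v ∧ v ≤ P.length) (hu : leftChild P v = some u) {j ℓ' r' : ℕ}
    (hm : IsMinFixedInterval T P v i ℓ r) (h' : IsFixedInterval T P u j ℓ' r') (hr' : r' < i)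
    (hij : val T i < val T j) : ℓ' ≤ ℓ :=
  (hm.le hT (hm.1.join_leftChild hT hP hv hu h' hr' hij)).1

lemma IsMinFixedInterval.fst_le_of_mem_LFI (hT : T.Nodup) (hP : P.Nodup)
    (hv : 1 ≤ v ∧ v ≤ P.length) (hu : leftChild P v = some u)
    (hm : IsMinFixedInterval T P v i ℓ r) {p : WithBot ℕ × WithTop ℕ} (hp : p ∈ LFI T P u i)
    (hpi : p.2 < i) : p.1 ≤ ℓ := by
  obtain ⟨j, -, -, hij, rfl⟩ := hp
  obtain ⟨ℓ', r', hm'⟩ := exists_isMinFixedInterval_of_mfiR_ne_top hpi.ne_top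
  obtain ⟨hL, hR⟩ := hm'.mfi_eq hT
  simp only [hL, hR] at hpi ⊢
  exact_mod_cast hm.le_of_leftChild hT hP hv hu hm'.1 (by exact_mod_cast hpi) hij

lemma IsMinFixedInterval.exists_mem_LFI (hT : T.Nodup) (hP : P.Nodup)
    (hv : 1 ≤ v ∧ v ≤ P.length) (hu : leftChild P v = some u)
    (hm : IsMinFixedInterval T P v i ℓ r) : ∃ b, ((ℓ : WithBot ℕ), b) ∈ LFI T P u i ∧ b < i := by
  obtain ⟨j, hj₁, hj₂, hij, hfj⟩ := hm.1.exists_leftChild hT hP hv hu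
  obtain ⟨ℓ', r', hm'⟩ := hfj.exists_isMinFixedInterval
  obtain ⟨hℓ', hr'⟩ := hm'.le hT hfj
  have := hm.1.pivot_mem
  have := hm.1.1
  have hℓ'' := hm.le_of_leftChild hT hP hv hu hm'.1 (by omega) hij
  obtain ⟨hL, hR⟩ := hm'.mfi_eq hT
  refine ⟨r', ⟨j, hj₁, hj₂, hij, ?_⟩, by exact_mod_cast (show r' < i by omega)⟩
  rw [hL, hR, le_antisymm hℓ'' hℓ']

end LeftChild

theorem L_eq_max_LFIMin_general
    (T P : List ℤ) (hT : T.Nodup) (hP : P.Nodup)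
    (v i : ℕ) (hv : 1 ≤ v ∧ v ≤ P.length)
    (u : ℕ) (hu : leftChild P v = some u)
    (hex : ∃ ℓ r, IsMinFixedInterval T P v i ℓ r) :
    (∃ r, (mfiL T P v i, r) ∈ LFIMin T P u i ∧ r < (i : WithTop ℕ)) ∧
    (∀ p ∈ LFIMin T P u i, p.2 < (i : WithTop ℕ) → p.1 ≤ mfiL T P v i) := by
  obtain ⟨ℓ, r, hm⟩ := hex
  rw [(hm.mfi_eq hT).1]
  exact ⟨exists_minimal_of_fst_le (fun q hq => hm.fst_le_of_mem_LFI hT hP hv hu hq)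
      (hm.exists_mem_LFI hT hP hv hu),
    fun p hp => hm.fst_le_of_mem_LFI hT hP hv hu hp.1⟩

/-- If `v` has a left child `u = v.L` and `mfi(v,i) ≠ [-∞,∞]`, then
`L(v, i) = max { ℓ : [ℓ, r] ∈ LFI'(v, i), r < i }`: the left endpoint of the minimal
fixed-interval with pivot `(v, i)` is attained among the inclusion-minimal intervals of
`LFI(v, i)` whose right endpoint is less than `i`, and it is the maximum of their left
endpoints. -/
theorem L_eq_max_LFIMin
    (T P : List ℤ) (hT : T.Nodup) (hP : P.Nodup)
    (hm : 1 ≤ P.length) (hmn : P.length ≤ T.length)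
    (v i : ℕ) (hv : 1 ≤ v ∧ v ≤ P.length) (hi : 1 ≤ i ∧ i ≤ T.length)
    (u : ℕ) (hu : leftChild P v = some u)
    (hex : ∃ ℓ r, IsMinFixedInterval T P v i ℓ r) :
    (∃ r, (mfiL T P v i, r) ∈ LFIMin T P u i ∧ r < (i : WithTop ℕ)) ∧
    (∀ p ∈ LFIMin T P u i, p.2 < (i : WithTop ℕ) → p.1 ≤ mfiL T P v i) :=
  L_eq_max_LFIMin_general T P hT hP v i hv u hu hex
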